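/- In the lower-bound elimination construction for flows: given a network with lower and upper bounds (lower_{ij}, upper_{ij}) on each arc, arc (t,s) of infinite capacity added to make it circulation, and a new source s′ and sink t′ with arcs as in the standard transformation (for each vertex v, if the total lower bound entering v exceeds that leaving v, add arc (s′,v) with capacity equal to the excess, otherwise arc (v,t′) with capacity equal to the deficit, and replace each arc's capacity by upper−lower), a feasible circulation respecting the original lower and upper bounds exists if and only if the transformed network admits a flow from s′ to t′ saturating all arcs out of s′. -/
import Mathlib


/-- lower-bound elimination: On a finite directed network with
per-arc lower and upper flow bounds (arcs indexed by ordered pairs of vertices;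
absent arcs carry bounds `0 ≤ f ≤ 0`), a feasible circulation respecting the
bounds exists if and only if the standard transformed network — capacities
`upper − lower` on the original arcs, plus a new source `s'` with an arc
`(s',v)` of capacity `max(excess v, 0)` and a new sink `t'` with an arc
`(v,t')` of capacity `max(−excess v, 0)`, where
`excess v = Σ_u lower(u,v) − Σ_w lower(v,w)` — admits a feasible `s'`–`t'`
flow saturating all arcs out of `s'`. -/
theorem lower_bound_elimination
    {V : Type*} [Fintype V] [DecidableEq V]
    (lower upper : V → V → ℝ) :
    (∃ f : V → V → ℝ,
        (∀ u v, lower u v ≤ f u v ∧ f u v ≤ upper u v) ∧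
        (∀ v, ∑ u, f u v = ∑ w, f v w))
    ↔
    (∃ (g : V → V → ℝ) (gs gt : V → ℝ),
        -- capacities on original arcs are upper − lower
        (∀ u v, 0 ≤ g u v ∧ g u v ≤ upper u v - lower u v) ∧
        -- capacities on the new arcs (s',v) and (v,t')
        (∀ v, 0 ≤ gs v ∧
          gs v ≤ max ((∑ u, lower u v) - (∑ w, lower v w)) 0) ∧
        (∀ v, 0 ≤ gt v ∧
          gt v ≤ max (-((∑ u, lower u v) - (∑ w, lower v w))) 0) ∧
        -- flow conservation at every original vertex
        (∀ v, gs v + ∑ u, g u v = gt v + ∑ w, g v w) ∧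
        -- the flow saturates every arc out of s'
        (∀ v, gs v = max ((∑ u, lower u v) - (∑ w, lower v w)) 0)) := by
  set e : V → ℝ := fun v => (∑ u, lower u v) - (∑ w, lower v w) with he
  have hesum : ∑ v, e v = 0 := by
    simp only [he, Finset.sum_sub_distrib]
    rw [Finset.sum_comm]
    ring
  constructor
  · rintro ⟨f, hb, hc⟩
    refine ⟨fun u v => f u v - lower u v, fun v => max (e v) 0,
      fun v => max (-(e v)) 0, ?_, ?_, ?_, ?_, ?_⟩
    · intro u v
      have := hb u v
      simp only []; constructor <;> linarith [this.1, this.2]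
    · intro v; exact ⟨le_max_right _ _, le_refl _⟩
    · intro v; exact ⟨le_max_right _ _, le_refl _⟩
    · intro v
      have key : max (e v) 0 - max (-(e v)) 0 = e v :=
        max_zero_sub_max_neg_zero_eq_self (e v)
      have h1 : ∑ u, (f u v - lower u v) = (∑ u, f u v) - ∑ u, lower u v := by
        rw [Finset.sum_sub_distrib]
      have h2 : ∑ w, (f v w - lower v w) = (∑ w, f v w) - ∑ w, lower v w := by
        rw [Finset.sum_sub_distrib]
      rw [h1, h2]
      have := hc v
      simp only [he] at key ⊢
      linarith
    · intro v; rfl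
  · rintro ⟨g, gs, gt, hgb, hgs, hgt, hcons, hsat⟩
    -- total flow out of s' equals total into t'
    have htot : ∑ v, gs v = ∑ v, gt v := by
      have : ∑ v, (gs v + ∑ u, g u v) = ∑ v, (gt v + ∑ w, g v w) :=
        Finset.sum_congr rfl (fun v _ => hcons v)
      simp only [Finset.sum_add_distrib] at this
      rw [Finset.sum_comm (f := fun u v => g u v)] at this
      linarith
    have hmaxsum : ∑ v, max (e v) 0 = ∑ v, max (-(e v)) 0 := by
      have : ∑ v, (max (e v) 0 - max (-(e v)) 0) = ∑ v, e v :=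
        Finset.sum_congr rfl (fun v _ => max_zero_sub_max_neg_zero_eq_self (e v))
      rw [Finset.sum_sub_distrib, hesum] at this
      linarith
    have hgtsum : ∑ v, gt v = ∑ v, max (-(e v)) 0 := by
      rw [← hmaxsum, ← htot]
      exact Finset.sum_congr rfl (fun v _ => hsat v)
    have hgteq : ∀ v, gt v = max (-(e v)) 0 := by
      intro v
      have hle : ∀ i ∈ Finset.univ, gt i ≤ max (-(e i)) 0 := fun i _ => (hgt i).2
      exact (Finset.sum_eq_sum_iff_of_le hle).mp hgtsum v (Finset.mem_univ v)
    refine ⟨fun u v => g u v + lower u v, ?_, ?_⟩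
    · intro u v
      have := hgb u v
      simp only []; constructor <;> linarith [this.1, this.2]
    · intro v
      have key : max (e v) 0 - max (-(e v)) 0 = e v :=
        max_zero_sub_max_neg_zero_eq_self (e v)
      have h1 : ∑ u, (g u v + lower u v) = (∑ u, g u v) + ∑ u, lower u v := by
        rw [Finset.sum_add_distrib]
      have h2 : ∑ w, (g v w + lower v w) = (∑ w, g v w) + ∑ w, lower v w := by
        rw [Finset.sum_add_distrib]
      rw [h1, h2]
      have hc := hcons v
      rw [hsat v, hgteq v] at hc
      simp only [he] at key
      linarith
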